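/- arXiv:2106.06610 — 4 statements merged into one kernel-verified Lean document; each statement's English description precedes it below -/
import Mathlib

section
/- If f : (ℝ^d)^n → ℝ is invariant under the simultaneous action of the orthogonal group O(d) on each of its n vector arguments (i.e., f(Qv₁,...,Qvₙ) = f(v₁,...,vₙ) for all Q ∈ O(d)), then there exists a function g : ℝ^(n×n) → ℝ such that f(v₁,...,vₙ) = g(⟨vᵢ, vⱼ⟩)_{i,j=1}^n, i.e., f factors through the Gram matrix of its inputs. -/
/-!
Equal Gram matrices give the linear combinations `∑ cᵢ vᵢ` and `∑ cᵢ wᵢ` equal norms, so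
`∑ cᵢ vᵢ ↦ ∑ cᵢ wᵢ` is a well-defined isometry on the span of the `vᵢ`. Extended to the whole
space it is an orthogonal matrix carrying one tuple to the other, so an `O(d)`-invariant `f` is
constant on the fibres of the Gram map.
-/

open Matrix

theorem LinearMap.exists_linearIsometry_range_of_norm_eq {R M E F : Type*} [Ring R]
    [AddCommGroup M] [Module R M] [NormedAddCommGroup E] [Module R E]
    [NormedAddCommGroup F] [Module R F] {T : M →ₗ[R] E} {S : M →ₗ[R] F}
    (h : ∀ c, ‖T c‖ = ‖S c‖) :
    ∃ L : range T →ₗᵢ[R] F, ∀ c, L ⟨T c, c, rfl⟩ = S c := by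
  have hker : ker T ≤ ker S := fun c hc => by
    rw [mem_ker, ← norm_eq_zero, ← h, mem_ker.mp hc, norm_zero]
  let L := (ker T).liftQ S hker ∘ₗ T.quotKerEquivRange.symm.toLinearMap
  have hL : ∀ c, L ⟨T c, c, rfl⟩ = S c := fun c => by
    have : T.quotKerEquivRange.symm ⟨T c, c, rfl⟩ = (ker T).mkQ c := by
      rw [LinearEquiv.symm_apply_eq]; rfl
    simp [L, this]
  refine ⟨⟨L, ?_⟩, hL⟩
  rintro ⟨_, c, rfl⟩
  exact (congrArg norm (hL c)).trans (h c).symm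

theorem exists_linearIsometryEquiv_map_eq_of_gram_eq {𝕜 E ι : Type*} [RCLike 𝕜]
    [NormedAddCommGroup E] [InnerProductSpace 𝕜 E] [FiniteDimensional 𝕜 E] {v w : ι → E}
    (h : gram 𝕜 v = gram 𝕜 w) : ∃ L : E ≃ₗᵢ[𝕜] E, ∀ i, L (v i) = w i := by
  let T := Finsupp.linearCombination 𝕜 v
  let S := Finsupp.linearCombination 𝕜 w
  have hinner : ∀ c c', inner 𝕜 (T c) (T c') = inner 𝕜 (S c) (S c') := fun c c' => by
    have hvw : ∀ i j, inner 𝕜 (v i) (v j) = inner 𝕜 (w i) (w j) := fun i j =>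
      congrFun (congrFun h i) j
    simp only [T, S, Finsupp.linearCombination_apply, Finsupp.sum_inner, Finsupp.inner_sum,
      inner_smul_left, inner_smul_right, hvw]
  obtain ⟨L, hL⟩ := LinearMap.exists_linearIsometry_range_of_norm_eq (T := T) (S := S)
    fun c => by rw [@norm_eq_sqrt_re_inner 𝕜, @norm_eq_sqrt_re_inner 𝕜, hinner]
  refine ⟨L.extend.toLinearIsometryEquiv rfl, fun i => ?_⟩
  have hext := L.extend_apply ⟨T (Finsupp.single i 1), _, rfl⟩
  rw [hL] at hext
  simpa [T, S] using hext

theorem LinearIsometryEquiv.exists_mem_unitaryGroup_mulVec_eq {𝕜 ι : Type*} [RCLike 𝕜]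
    [Fintype ι] [DecidableEq ι] (L : EuclideanSpace 𝕜 ι ≃ₗᵢ[𝕜] EuclideanSpace 𝕜 ι) :
    ∃ U ∈ unitaryGroup ι 𝕜, ∀ x : EuclideanSpace 𝕜 ι, U *ᵥ x.ofLp = (L x).ofLp := by
  let b := EuclideanSpace.basisFun ι 𝕜
  exact ⟨_, L.toMatrix_mem_unitaryGroup b b,
    LinearMap.toMatrix_mulVec_repr b.toBasis b.toBasis L.toLinearMap⟩

/-- An O(d)-invariant scalar function of n vectors factors through
the Gram matrix of its inputs. -/
theorem od_invariant_factors_through_gram (d n : ℕ)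
    (f : (Fin n → Fin d → ℝ) → ℝ)
    (hf : ∀ Q : Matrix (Fin d) (Fin d) ℝ, Q ∈ Matrix.orthogonalGroup (Fin d) ℝ →
      ∀ v : Fin n → Fin d → ℝ, f (fun i => Q.mulVec (v i)) = f v) :
    ∃ g : Matrix (Fin n) (Fin n) ℝ → ℝ,
      ∀ v : Fin n → Fin d → ℝ,
        f v = g (Matrix.of fun i j => dotProduct (v i) (v j)) := by
  have hfactor : f.FactorsThrough fun v => Matrix.of fun i j => dotProduct (v i) (v j) := by
    intro v w hvw
    obtain ⟨L, hL⟩ := exists_linearIsometryEquiv_map_eq_of_gram_eq (𝕜 := ℝ)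
      (v := fun i => WithLp.toLp 2 (v i)) (w := fun i => WithLp.toLp 2 (w i)) <| by
        ext i j
        simpa [gram_apply, EuclideanSpace.inner_toLp_toLp, dotProduct_comm] using
          congrFun (congrFun hvw i) j
    obtain ⟨Q, hQ, hQL⟩ := L.exists_mem_unitaryGroup_mulVec_eq
    rw [← hf Q hQ v]
    congr 1
    funext i
    simpa [hL] using hQL (WithLp.toLp 2 (v i))
  exact ⟨Function.extend _ f 0, fun v => (hfactor.extend_apply 0 v).symm⟩
end

section
/- Let h : (ℝ^d)^n → ℝ^d be O(d)-equivariant, i.e., h(Qv₁,...,Qvₙ) = Q·h(v₁,...,vₙ) for all Q ∈ O(d). Then for every tuple (v₁,...,vₙ), the vector h(v₁,...,vₙ) lies in the linear span of {v₁,...,vₙ}. -/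
/-! The reflection in the span of the inputs is orthogonal and fixes every input, so by
equivariance it fixes the output; the vectors fixed by that reflection are exactly those of the
span. -/

open Matrix WithLp

theorem LinearIsometryEquiv.exists_mem_orthogonalGroup_mulVec_eq {ι : Type*} [Fintype ι]
    [DecidableEq ι] (f : EuclideanSpace ℝ ι ≃ₗᵢ[ℝ] EuclideanSpace ℝ ι) :
    ∃ Q ∈ orthogonalGroup ι ℝ, ∀ x : ι → ℝ, Q *ᵥ x = ofLp (f (toLp 2 x)) := by
  let b := (EuclideanSpace.basisFun ι ℝ).toBasis
  refine ⟨f.toMatrix b b, f.toMatrix_mem_unitaryGroup _ _, fun x => ?_⟩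
  change ofLp (toEuclideanLin _ (toLp 2 x)) = _
  rw [toEuclideanLin_eq_toLin_orthonormal, Matrix.toLin_toMatrix]
  rfl

theorem Submodule.mem_span_of_forall_orthogonal_mulVec_eq_self {ι : Type*} [Fintype ι]
    [DecidableEq ι] (s : Set (ι → ℝ)) (x : ι → ℝ)
    (hx : ∀ Q ∈ orthogonalGroup ι ℝ, (∀ v ∈ s, Q *ᵥ v = v) → Q *ᵥ x = x) :
    x ∈ span ℝ s := by
  let K : Submodule ℝ (EuclideanSpace ℝ ι) :=
    (span ℝ s).comap (WithLp.linearEquiv 2 ℝ (ι → ℝ)).toLinearMap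
  obtain ⟨Q, hQ, hQf⟩ := K.reflection.exists_mem_orthogonalGroup_mulVec_eq
  have hfix : ∀ v ∈ s, Q *ᵥ v = v := fun v hv => by
    rw [hQf, reflection_mem_subspace_eq_self (K := K) (subset_span hv)]
  have hxK : K.reflection (toLp 2 x) = toLp 2 x := by
    simpa [hQf] using congrArg (toLp 2) (hx Q hQ hfix)
  exact (reflection_eq_self_iff (toLp 2 x)).mp hxK

/-- An O(d)-equivariant vector function of n vectors takes values in the
linear span of its inputs. -/
theorem od_equivariant_mem_span (d n : ℕ)
    (h : (Fin n → Fin d → ℝ) → Fin d → ℝ)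
    (hh : ∀ Q : Matrix (Fin d) (Fin d) ℝ, Q ∈ Matrix.orthogonalGroup (Fin d) ℝ →
      ∀ v : Fin n → Fin d → ℝ, h (fun i => Q.mulVec (v i)) = Q.mulVec (h v)) :
    ∀ v : Fin n → Fin d → ℝ, h v ∈ Submodule.span ℝ (Set.range v) := by
  intro v
  refine Submodule.mem_span_of_forall_orthogonal_mulVec_eq_self _ _ fun Q hQ hfix => ?_
  have hQv : (fun i => Q *ᵥ v i) = v := funext fun i => hfix _ ⟨i, rfl⟩
  rw [← hh Q hQ v, hQv]
end

section
/- Let h : (ℝ^d)^n → ℝ^d be O(d)-equivariant. Then there exist n O(d)-invariant scalar functions f₁,...,fₙ : (ℝ^d)^n → ℝ such that h(v₁,...,vₙ) = Σ_{t=1}^n fₜ(v₁,...,vₙ) · vₜ for all inputs. -/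
/-!
The reflection in `W = span (v₁, …, vₙ)` is orthogonal and fixes every `vₜ`, so equivariance
makes it fix `h v` as well, which forces `h v ∈ W`. The coefficients of `h v` in the `vₜ` are not
unique, so to make them invariant they are chosen once on a representative of each `O(d)`-orbit
and carried along the orbit by equivariance.
-/

open Matrix

theorem MulAction.exists_orbit_invariant_choice {G X C : Type*} [Group G] [MulAction G X]
    (P : X → C → Prop) (hP : ∀ x, ∃ c, P x c) (hP_smul : ∀ (g : G) x c, P x c → P (g • x) c) :
    ∃ f : X → C, (∀ (g : G) x, f (g • x) = f x) ∧ ∀ x, P x (f x) := by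
  let rep : X → X := fun x => (Quotient.mk (orbitRel G X) x).out
  refine ⟨fun x => (hP (rep x)).choose, fun g x => ?_, fun x => ?_⟩
  · have : rep (g • x) = rep x :=
      congrArg Quotient.out (Quotient.sound (mem_orbit x g))
    simp only [this]
  · obtain ⟨g, hg⟩ : x ∈ orbit G (rep x) :=
      orbitRel_apply.mp ((orbitRel G X).symm (Quotient.mk_out x))
    simpa only [hg] using hP_smul g (rep x) _ (hP (rep x)).choose_spec

theorem Matrix.exists_mem_orthogonalGroup_mulVec_eq_self_iff {ι : Type*} [Fintype ι]
    [DecidableEq ι] (K : Submodule ℝ (ι → ℝ)) :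
    ∃ Q ∈ orthogonalGroup ι ℝ, ∀ x, Q *ᵥ x = x ↔ x ∈ K := by
  let b := (EuclideanSpace.basisFun ι ℝ).toBasis
  let R := (K.comap (WithLp.linearEquiv 2 ℝ (ι → ℝ)).toLinearMap).reflection
  refine ⟨LinearMap.toMatrix b b R, R.toMatrix_mem_unitaryGroup _ _, fun x => ?_⟩
  have hR : WithLp.toLp 2 (LinearMap.toMatrix b b R *ᵥ x) = R (WithLp.toLp 2 x) := by
    change toLin b b (LinearMap.toMatrix b b R) _ = _
    rw [toLin_toMatrix]
    rfl
  rw [← (WithLp.toLp_injective 2).eq_iff, hR, Submodule.reflection_eq_self_iff]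
  rfl

theorem mem_span_range_of_orthogonal_equivariant {ι κ : Type*} [Fintype ι] [DecidableEq ι]
    {h : (κ → ι → ℝ) → ι → ℝ}
    (hh : ∀ Q ∈ orthogonalGroup ι ℝ, ∀ v : κ → ι → ℝ, h (fun i => Q *ᵥ v i) = Q *ᵥ h v)
    (w : κ → ι → ℝ) : h w ∈ Submodule.span ℝ (Set.range w) := by
  obtain ⟨Q, hQ, hfix⟩ :=
    exists_mem_orthogonalGroup_mulVec_eq_self_iff (Submodule.span ℝ (Set.range w))
  have hQw : (fun i => Q *ᵥ w i) = w := funext fun i => (hfix _).2 (Submodule.subset_span ⟨i, rfl⟩)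
  rw [← hfix, ← hh Q hQ, hQw]

/-- An O(d)-equivariant vector function can be written as a linear
combination of the inputs with O(d)-invariant scalar coefficient functions. -/
theorem od_equivariant_eq_invariant_combination (d n : ℕ)
    (h : (Fin n → Fin d → ℝ) → Fin d → ℝ)
    (hh : ∀ Q : Matrix (Fin d) (Fin d) ℝ, Q ∈ Matrix.orthogonalGroup (Fin d) ℝ →
      ∀ v : Fin n → Fin d → ℝ, h (fun i => Q.mulVec (v i)) = Q.mulVec (h v)) :
    ∃ f : Fin n → ((Fin n → Fin d → ℝ) → ℝ),
      (∀ t, ∀ Q : Matrix (Fin d) (Fin d) ℝ, Q ∈ Matrix.orthogonalGroup (Fin d) ℝ →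
        ∀ v : Fin n → Fin d → ℝ, f t (fun i => Q.mulVec (v i)) = f t v) ∧
      ∀ v : Fin n → Fin d → ℝ, h v = ∑ t, f t v • v t := by
  have hcoeffs (v : Fin n → Fin d → ℝ) : ∃ c : Fin n → ℝ, h v = ∑ t, c t • v t :=
    ((Submodule.mem_span_range_iff_exists_fun ℝ).mp
      (mem_span_range_of_orthogonal_equivariant hh v)).imp fun _ hc => hc.symm
  have hcoeffs_smul (Q : orthogonalGroup (Fin d) ℝ) (v : Fin n → Fin d → ℝ) (c : Fin n → ℝ)
      (hc : h v = ∑ t, c t • v t) : h (Q • v) = ∑ t, c t • (Q • v) t := by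
    -- `O(d)` acts on tuples coordinatewise, through the `*ᵥ` action of matrices on vectors
    change h (fun i => Q.1 *ᵥ v i) = ∑ t, c t • Q.1 *ᵥ v t
    simp only [hh Q.1 Q.2, hc, mulVec_sum, mulVec_smul]
  obtain ⟨f, hf_inv, hf⟩ := MulAction.exists_orbit_invariant_choice _ hcoeffs hcoeffs_smul
  exact ⟨fun t v => f v t, fun t Q hQ v => congrFun (hf_inv ⟨Q, hQ⟩ v) t, hf⟩
end

section
/- Let h : (ℝ^d)^n → ℝ^d be SO(d)-equivariant, and suppose (v₁,...,vₙ) is a tuple such that dim span(v₁,...,vₙ) ≠ d-1. Then h(v₁,...,vₙ) ∈ span(v₁,...,vₙ). -/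
/-!
Let `W` be the span of the inputs and write `h v = a + p` with `a ∈ W` and `p ⊥ W`. If `p ≠ 0`,
then `W` has codimension at least two, so some nonzero `w ⊥ W` is orthogonal to `p`. The product
of the reflections in the hyperplanes `w^⊥` and `p^⊥` is a rotation fixing `W` pointwise and
sending `p` to `-p`, so equivariance gives `a + p = h v = a - p`, i.e. `p = 0`.
-/

open Module Submodule WithLp Matrix

section InnerProductSpace

variable {𝕜 E : Type*} [RCLike 𝕜] [NormedAddCommGroup E] [InnerProductSpace 𝕜 E]

theorem Submodule.exists_mem_ne_zero_inner_eq_zero_of_two_le_finrank {V : Submodule 𝕜 E}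
    [FiniteDimensional 𝕜 V] (hV : 2 ≤ finrank 𝕜 V) (p : E) :
    ∃ w ∈ V, w ≠ 0 ∧ inner 𝕜 p w = 0 := by
  have hker : LinearMap.ker ((innerₛₗ 𝕜 p).comp V.subtype) ≠ ⊥ :=
    LinearMap.ker_ne_bot_of_finrank_lt (by rw [finrank_self]; omega)
  obtain ⟨w, hw, hw0⟩ := exists_mem_ne_zero_of_ne_bot hker
  exact ⟨w, w.2, by simpa using hw0, by simpa using hw⟩

variable [FiniteDimensional 𝕜 E]

theorem Submodule.det_reflection_orthogonal_singleton {v : E} (hv : v ≠ 0) :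
    LinearMap.det (𝕜 ∙ v)ᗮ.reflection.toLinearMap = -1 := by
  rw [det_reflection, orthogonal_orthogonal, finrank_span_singleton hv, pow_one]

theorem Submodule.exists_det_eq_one_fixing_and_neg {K : Submodule 𝕜 E}
    (hK : finrank 𝕜 Kᗮ ≠ 1) {p : E} (hpK : p ∈ Kᗮ) (hp : p ≠ 0) :
    ∃ f : E ≃ₗᵢ[𝕜] E, LinearMap.det f.toLinearMap = 1 ∧ (∀ x ∈ K, f x = x) ∧ f p = -p := by
  have h2 : 2 ≤ finrank 𝕜 Kᗮ := by
    have : finrank 𝕜 Kᗮ ≠ 0 := fun h => hp (by simpa [finrank_eq_zero.mp h] using hpK)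
    omega
  obtain ⟨w, hwK, hw, hpw⟩ := Kᗮ.exists_mem_ne_zero_inner_eq_zero_of_two_le_finrank h2 p
  refine ⟨(𝕜 ∙ w)ᗮ.reflection.trans (𝕜 ∙ p)ᗮ.reflection, ?_, fun x hx => ?_, ?_⟩
  · rw [LinearIsometryEquiv.toLinearEquiv_trans, LinearEquiv.coe_trans, LinearMap.det_comp,
      det_reflection_orthogonal_singleton hp, det_reflection_orthogonal_singleton hw]
    norm_num
  · have hx' : ∀ u ∈ Kᗮ, x ∈ (𝕜 ∙ u)ᗮ := fun u hu =>
      mem_orthogonal_singleton_iff_inner_right.mpr (inner_left_of_mem_orthogonal hx hu)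
    simp [reflection_mem_subspace_eq_self (hx' w hwK),
      reflection_mem_subspace_eq_self (hx' p hpK)]
  · have : p ∈ (𝕜 ∙ w)ᗮ := mem_orthogonal_singleton_iff_inner_right.mpr
      (by rw [← inner_conj_symm, hpw, map_zero])
    simp [reflection_mem_subspace_eq_self this, reflection_orthogonalComplement_singleton_eq_neg]

theorem Submodule.mem_of_forall_det_eq_one_fixing {K : Submodule 𝕜 E} (hK : finrank 𝕜 Kᗮ ≠ 1)
    {y : E} (hy : ∀ f : E ≃ₗᵢ[𝕜] E, LinearMap.det f.toLinearMap = 1 → (∀ x ∈ K, f x = x) →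
      f y = y) : y ∈ K := by
  set p := y - K.starProjection y
  suffices p = 0 by rw [← K.starProjection_eq_self_iff]; exact (sub_eq_zero.mp this).symm
  by_contra hp
  obtain ⟨f, hdet, hfix, hfp⟩ :=
    exists_det_eq_one_fixing_and_neg hK (K.sub_starProjection_mem_orthogonal y) hp
  have hfp' : f p = p := by
    simp only [p, map_sub, hy f hdet hfix, hfix _ (K.starProjection_apply_mem y)]
  have := IsAddTorsionFree.of_isTorsionFree 𝕜 E
  exact hp (self_eq_neg.mp (hfp'.symm.trans hfp))

theorem mem_span_range_of_equivariant {ι : Type*} (h : (ι → E) → E)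
    (hh : ∀ f : E ≃ₗᵢ[𝕜] E, LinearMap.det f.toLinearMap = 1 → ∀ v, h (f ∘ v) = f (h v))
    {v : ι → E} (hv : finrank 𝕜 (span 𝕜 (Set.range v))ᗮ ≠ 1) :
    h v ∈ span 𝕜 (Set.range v) := by
  refine mem_of_forall_det_eq_one_fixing hv fun f hdet hfix => ?_
  have : f ∘ v = v := funext fun i => hfix _ (subset_span (Set.mem_range_self i))
  rw [← hh f hdet, this]

end InnerProductSpace

section EuclideanSpace

variable {𝕜 ι : Type*} [RCLike 𝕜] [Fintype ι] [DecidableEq ι]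

theorem LinearIsometryEquiv.toEuclideanLin_symm_mem_unitaryGroup
    (f : EuclideanSpace 𝕜 ι ≃ₗᵢ[𝕜] EuclideanSpace 𝕜 ι) :
    toEuclideanLin.symm f.toLinearMap ∈ unitaryGroup ι 𝕜 := by
  rw [toEuclideanLin_eq_toLin_orthonormal]
  exact f.toMatrix_mem_unitaryGroup _ _

theorem Matrix.det_toEuclideanLin_symm (g : EuclideanSpace 𝕜 ι →ₗ[𝕜] EuclideanSpace 𝕜 ι) :
    (toEuclideanLin.symm g).det = LinearMap.det g := by
  rw [toEuclideanLin_eq_toLin_orthonormal, toLin_symm, LinearMap.det_toMatrix]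

theorem Matrix.toEuclideanLin_symm_mulVec (g : EuclideanSpace 𝕜 ι →ₗ[𝕜] EuclideanSpace 𝕜 ι)
    (x : ι → 𝕜) : toEuclideanLin.symm g *ᵥ x = ofLp (g (toLp 2 x)) := by
  conv_rhs => rw [← toEuclideanLin.apply_symm_apply g]
  rfl

end EuclideanSpace

theorem WithLp.span_range_toLp {𝕜 V ι : Type*} [Ring 𝕜] [AddCommGroup V] [Module 𝕜 V]
    (p : ENNReal) (v : ι → V) : span 𝕜 (Set.range (toLp p ∘ v)) =
      (span 𝕜 (Set.range v)).map ((WithLp.linearEquiv p 𝕜 V).symm : V →ₗ[𝕜] WithLp p V) := by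
  rw [map_span, ← Set.range_comp]; rfl

/-- An SO(d)-equivariant vector function lies in the span of its inputs,
provided the inputs do not span a (d-1)-dimensional subspace. -/
theorem sod_equivariant_mem_span (d n : ℕ)
    (h : (Fin n → Fin d → ℝ) → Fin d → ℝ)
    (hh : ∀ Q : Matrix (Fin d) (Fin d) ℝ,
      Q ∈ Matrix.orthogonalGroup (Fin d) ℝ → Q.det = 1 →
      ∀ v : Fin n → Fin d → ℝ, h (fun i => Q.mulVec (v i)) = Q.mulVec (h v)) :
    ∀ v : Fin n → Fin d → ℝ,
      Module.finrank ℝ (Submodule.span ℝ (Set.range v)) ≠ d - 1 →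
      h v ∈ Submodule.span ℝ (Set.range v) := by
  intro v hv
  have hspan := WithLp.span_range_toLp (𝕜 := ℝ) 2 v
  have hcodim : finrank ℝ (span ℝ (Set.range (toLp 2 ∘ v)))ᗮ ≠ 1 := by
    have hrank : finrank ℝ (span ℝ (Set.range (toLp 2 ∘ v))) =
        finrank ℝ (span ℝ (Set.range v)) := by
      rw [hspan, LinearEquiv.finrank_map_eq]
    have := (span ℝ (Set.range (toLp 2 ∘ v))).finrank_add_finrank_orthogonal
    rw [hrank, finrank_euclideanSpace_fin] at this
    omega
  have hequiv (f : EuclideanSpace ℝ (Fin d) ≃ₗᵢ[ℝ] EuclideanSpace ℝ (Fin d))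
      (hf : LinearMap.det f.toLinearMap = 1) (u : Fin n → EuclideanSpace ℝ (Fin d)) :
      toLp 2 (h (ofLp ∘ f ∘ u)) = f (toLp 2 (h (ofLp ∘ u))) := by
    have := hh _ f.toEuclideanLin_symm_mem_unitaryGroup
      (by rw [det_toEuclideanLin_symm, hf]) (ofLp ∘ u)
    simp only [toEuclideanLin_symm_mulVec] at this
    exact congrArg (toLp 2) this
  have hmem := mem_span_range_of_equivariant (fun u => toLp 2 (h (ofLp ∘ u))) hequiv hcodim
  rw [hspan] at hmem
  simpa [Function.comp_def] using hmem
end
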